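/- Let x ∈ [3/4, 1], ε > 0 sufficiently small, J = 10, and let μ₁,…,μ_J, ν₁,…,ν_J be nonnegative reals with ∑ᵢ μᵢ + ∑ⱼ νⱼ = x, each μᵢ ≤ x/J, and ν₁ ≥ ν₂ ≥ … ≥ ν_J. Suppose no subsum σ = ∑_{i∈I} μᵢ + ∑_{j∈J'} νⱼ (over subsets I, J' of {1,…,J}) lies in the interval [x/6 - ε, x/3 + ε]. Then ν₁ + ν₂ ≥ 5x/6 + ε. -/

import Mathlib

open Finset

/-!
Every `μᵢ`, and every `νⱼ` with `j ≥ 3`, is no longer than the forbidden window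
`[x/6 - ε, x/3 + ε]`, so partial sums of these pieces, growing one piece at a time from `0`,
can never jump over the window: their total stays below `x/6 - ε`. Hence `ν₁ + ν₂`, which is
everything else, exceeds `5x/6 + ε`. The pieces `νⱼ` with `j ≥ 3` are short because `ν₃` cannot
exceed the window either, as then `ν₁ + ν₂ + ν₃ > x`.
-/

section SubsumsAvoidingInterval

variable {ι α : Type*} [AddCommGroup α] [LinearOrder α] [IsOrderedAddMonoid α]

theorem sum_lt_of_subsums_notMem_Icc {f : ι → α} {a b : α} (s : Finset ι) (ha : 0 < a)
    (hf : ∀ i ∈ s, f i ≤ b - a) (havoid : ∀ t ⊆ s, ∑ i ∈ t, f i ∉ Set.Icc a b) :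
    ∑ i ∈ s, f i < a := by
  classical
  induction s using Finset.induction_on with
  | empty => simpa using ha
  | insert i s hi ih =>
    have hs : ∑ j ∈ s, f j < a :=
      ih (fun j hj => hf j (mem_insert_of_mem hj))
        (fun t ht => havoid t (ht.trans (subset_insert i s)))
    have hle : ∑ j ∈ insert i s, f j ≤ b := by
      rw [sum_insert hi]
      calc f i + ∑ j ∈ s, f j ≤ (b - a) + a := add_le_add (hf i (mem_insert_self i s)) hs.le
        _ = b := sub_add_cancel b a
    by_contra! hge
    exact havoid _ Subset.rfl ⟨hge, hle⟩

end SubsumsAvoidingInterval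

theorem stmt_7_general (x ε : ℝ)
    (hε : 0 < ε) (hεs : ε < x / 100)
    (μ ν : Fin 10 → ℝ) (hμ0 : ∀ i, 0 ≤ μ i) (hν0 : ∀ j, 0 ≤ ν j)
    (hsum : ∑ i, μ i + ∑ j, ν j = x)
    (hμ : ∀ i, μ i ≤ x / 10)
    (hνmono : ∀ i j : Fin 10, i ≤ j → ν j ≤ ν i)
    (hno : ∀ I J' : Finset (Fin 10),
      ¬(x / 6 - ε ≤ ∑ i ∈ I, μ i + ∑ j ∈ J', ν j ∧
        ∑ i ∈ I, μ i + ∑ j ∈ J', ν j ≤ x / 3 + ε)) :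
    ν 0 + ν 1 ≥ 5 * x / 6 + ε := by
  set tail : Finset (Fin 10) := {0, 1}ᶜ
  have hν_split : ∑ j, ν j = ∑ j ∈ tail, ν j + (ν 0 + ν 1) := by
    rw [← sum_compl_add_sum {0, 1}, sum_pair (by decide)]
  have hν2 : ν 2 < x / 6 - ε := by
    by_contra! h2
    have h2' : x / 3 + ε < ν 2 := by
      by_contra! h
      exact hno ∅ {2} (by simp only [sum_empty, sum_singleton, zero_add]; exact ⟨h2, h⟩)
    have htail : ν 2 ≤ ∑ j ∈ tail, ν j :=
      single_le_sum (fun j _ => hν0 j) (by decide : (2 : Fin 10) ∈ tail)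
    linarith [hνmono 0 2 (by decide), hνmono 1 2 (by decide),
      sum_nonneg fun i (_ : i ∈ univ) => hμ0 i]
  have hsmall : ∑ i, μ i + ∑ j ∈ tail, ν j < x / 6 - ε := by
    rw [← sum_sumElim]
    refine sum_lt_of_subsums_notMem_Icc (b := x / 3 + ε) _ (by linarith) ?_ ?_
    · rintro (i | j) hij
      · simp only [Sum.elim_inl]
        linarith [hμ i]
      · have hj : 2 ≤ j := by revert j; decide
        simp only [Sum.elim_inr]
        linarith [hνmono 2 j hj]
    · intro t _
      rw [sum_sum_eq_sum_toLeft_add_sum_toRight]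
      exact hno t.toLeft t.toRight
  linarith

/-- combinatorial subsum dichotomy with `J = 10`. -/
theorem stmt_7 (x ε : ℝ) (hx : 3 / 4 ≤ x) (hx1 : x ≤ 1)
    (hε : 0 < ε) (hεs : ε < x / 100)
    (μ ν : Fin 10 → ℝ) (hμ0 : ∀ i, 0 ≤ μ i) (hν0 : ∀ j, 0 ≤ ν j)
    (hsum : ∑ i, μ i + ∑ j, ν j = x)
    (hμ : ∀ i, μ i ≤ x / 10)
    (hνmono : ∀ i j : Fin 10, i ≤ j → ν j ≤ ν i)
    (hno : ∀ I J' : Finset (Fin 10),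
      ¬(x / 6 - ε ≤ ∑ i ∈ I, μ i + ∑ j ∈ J', ν j ∧
        ∑ i ∈ I, μ i + ∑ j ∈ J', ν j ≤ x / 3 + ε)) :
    ν 0 + ν 1 ≥ 5 * x / 6 + ε :=
  stmt_7_general x ε hε hεs μ ν hμ0 hν0 hsum hμ hνmono hno
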